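/- Let A be a T-brace, let n be a natural number, and suppose a ∈ ζ_n(⋆,A) \ ζ(⋆,A). If a has infinite additive order, then a ⋆ a ≠ 0. -/

import Mathlib

/-!
Basic theory of left braces (skew left braces of abelian type), following
Dixon–Kurdachenko–Subbotin, "On the structure of braces whose subideals are ideals".
-/

universe u v

/-- A left brace: an abelian group `(A,+)`, a group `(A,·)`, satisfying
`a(b+c) = ab + ac - a`.  (The additive and multiplicative identities then coincide.) -/
class LeftBrace (A : Type u) extends AddCommGroup A, Group A where
  mul_add_eq : ∀ a b c : A, a * (b + c) = a * b + a * c - a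

namespace LeftBrace

variable {A : Type u} [LeftBrace A]

/-- The star operation `a ⋆ b = ab - a - b`. -/
def bstar (a b : A) : A := a * b - a - b

/-- A subset of a left brace is a subbrace if it is closed under the additive-group
and multiplicative-group operations (equivalently, it is a left brace under the
restricted operations). -/
structure IsSubbrace (S : Set A) : Prop where
  zero_mem : (0 : A) ∈ S
  add_mem : ∀ {a b : A}, a ∈ S → b ∈ S → a + b ∈ S
  neg_mem : ∀ {a : A}, a ∈ S → -a ∈ S
  mul_mem : ∀ {a b : A}, a ∈ S → b ∈ S → a * b ∈ S
  inv_mem : ∀ {a : A}, a ∈ S → a⁻¹ ∈ S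

/-- `I` is an ideal of the subbrace `J`: `I ⊆ J`, both are subbraces, and
`a ⋆ z, z ⋆ a ∈ I` for all `a ∈ J`, `z ∈ I`. -/
structure IsIdealIn (I J : Set A) : Prop where
  subset : I ⊆ J
  subbrace : IsSubbrace I
  ambient_subbrace : IsSubbrace J
  star_mem_left : ∀ a ∈ J, ∀ z ∈ I, bstar a z ∈ I
  star_mem_right : ∀ a ∈ J, ∀ z ∈ I, bstar z a ∈ I

/-- `I` is an ideal of the brace `A`. -/
def IsIdeal (I : Set A) : Prop := IsIdealIn I (Set.univ : Set A)

/-- `A` is a T-brace if being an ideal is a transitive relation: an ideal of an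
ideal of `A` is an ideal of `A`. -/
def IsTBrace (A : Type u) [LeftBrace A] : Prop :=
  ∀ I J : Set A, IsIdealIn I J → IsIdeal J → IsIdeal I

/-- The `⋆`-center `ζ(⋆,A) = {a | a ⋆ x = x ⋆ a = 0 for all x}`. -/
def starCenter (A : Type u) [LeftBrace A] : Set A :=
  {a : A | ∀ x : A, bstar a x = 0 ∧ bstar x a = 0}

/-- The preimage in `A` of the `⋆`-center of the quotient of `A` by (the ideal) `S`:
`a` belongs to it iff `a ⋆ x ∈ S` and `x ⋆ a ∈ S` for every `x ∈ A`. -/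
def nextCenter (A : Type u) [LeftBrace A] (S : Set A) : Set A :=
  {a : A | ∀ x : A, bstar a x ∈ S ∧ bstar x a ∈ S}

/-- The upper `⋆`-central series, indexed by naturals:
`ζ₀(⋆,A) = 0` and `ζ_{n+1}(⋆,A)/ζ_n(⋆,A) = ζ(⋆, A/ζ_n(⋆,A))`. -/
def zetaNat (A : Type u) [LeftBrace A] : ℕ → Set A
  | 0 => ({0} : Set A)
  | n + 1 => nextCenter A (zetaNat A n)

/-- The upper `⋆`-central series, indexed by ordinals (unions at limit ordinals). -/
noncomputable def zetaOrd (A : Type u) [LeftBrace A] (o : Ordinal.{v}) : Set A :=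
  Ordinal.limitRecOn o (({0} : Set A))
    (fun _ ih => nextCenter A ih)
    (fun o _ ih => ⋃ (o' : Ordinal) (h : o' < o), ih o' h)

/-- The upper `⋆`-hypercenter `ζ_∞(⋆,A)`: the final (stable) term of the upper
`⋆`-central series, i.e. the union of all its terms. -/
noncomputable def starHypercenter (A : Type u) [LeftBrace A] : Set A :=
  ⋃ o : Ordinal.{u}, zetaOrd A o

/-- `A` is `⋆`-hypercentral if `A = ζ_γ(⋆,A)` for some ordinal `γ`. -/
def IsStarHypercentral (A : Type u) [LeftBrace A] : Prop :=
  ∃ γ : Ordinal.{u}, zetaOrd A γ = (Set.univ : Set A)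

/-- `K ⋆ L`: the additive subgroup of `(A,+)` generated by all `x ⋆ y`, `x ∈ K`, `y ∈ L`. -/
def setStar (K L : Set A) : AddSubgroup A :=
  AddSubgroup.closure {z : A | ∃ x ∈ K, ∃ y ∈ L, z = bstar x y}

/-- `rightStarSeries A n = A^{(n+1)}`, where `A^{(1)} = A` and `A^{(n+1)} = A^{(n)} ⋆ A`. -/
def rightStarSeries (A : Type u) [LeftBrace A] : ℕ → Set A
  | 0 => (Set.univ : Set A)
  | n + 1 => ((setStar (rightStarSeries A n) (Set.univ : Set A) : AddSubgroup A) : Set A)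

/-- `leftStarSeries A n = A^{n+1}`, where `A^1 = A` and `A^{n+1} = A ⋆ A^n`. -/
def leftStarSeries (A : Type u) [LeftBrace A] : ℕ → Set A
  | 0 => (Set.univ : Set A)
  | n + 1 => ((setStar (Set.univ : Set A) (leftStarSeries A n) : AddSubgroup A) : Set A)

/-- `A` is Smoktunowicz-nilpotent if `A^{(n)} = A^k = 0` for some naturals `n, k`. -/
def IsSmoktunowiczNilpotent (A : Type u) [LeftBrace A] : Prop :=
  ∃ n k : ℕ, rightStarSeries A n = ({0} : Set A) ∧ leftStarSeries A k = ({0} : Set A)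

/-- The subbrace generated by a subset `M`: the intersection of all subbraces containing `M`. -/
def braceClosure (M : Set A) : Set A := ⋂₀ {S : Set A | IsSubbrace S ∧ M ⊆ S}

end LeftBrace

/-!
Suppose `a ⋆ a = 0`. Then `m • a = a ^ m` for all `m : ℤ`, and each `ℤa + ζᵢ(⋆,A)` is an ideal of
`ℤa + ζᵢ₊₁(⋆,A)`; the top of this chain is the ideal `ζₙ(⋆,A)`, so transitivity of ideals makes `ℤa`
an ideal of `A`. As `a` is not central there is an `x` with `x ⋆ a = c • a` or `a ⋆ x = c • a` for
some `c ≠ 0`, and applying `x ⋆ -` (resp. `- ⋆ x`) `n` times walks `a` down the central series: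
`c ^ n • a ∈ ζ₀(⋆,A) = 0`, so `a` has finite additive order.
-/

open Pointwise AddSubgroup

namespace LeftBrace

variable {A : Type u} [LeftBrace A]

section Lambda

theorem one_eq_zero : (1 : A) = 0 := by
  simpa using (mul_add_eq (1 : A) 0 0).symm

/-- `λₐ`, the action of `(A,·)` on `(A,+)` by automorphisms. -/
def lam (a b : A) : A := a * b - a

theorem lam_add (a b c : A) : lam a (b + c) = lam a b + lam a c := by
  unfold lam; rw [mul_add_eq]; abel

def lamHom (a : A) : A →+ A := AddMonoidHom.mk' (lam a) (lam_add a)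

theorem lam_neg (a b : A) : lam a (-b) = -lam a b := (lamHom a).map_neg b

theorem lam_sub (a b c : A) : lam a (b - c) = lam a b - lam a c := (lamHom a).map_sub b c

theorem lam_zsmul (a : A) (m : ℤ) (b : A) : lam a (m • b) = m • lam a b :=
  map_zsmul (lamHom a) m b

theorem mul_eq_lam_add (a b : A) : a * b = lam a b + a := by
  unfold lam; abel

theorem bstar_eq_lam_sub (a b : A) : bstar a b = lam a b - b := rfl

theorem lam_eq_bstar_add (a b : A) : lam a b = bstar a b + b := by
  unfold lam bstar; abel

theorem lam_mul (a b c : A) : lam (a * b) c = lam a (lam b c) := by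
  show _ = lam a (b * c - b)
  rw [lam_sub]; unfold lam; rw [mul_assoc]; abel

theorem lam_one (b : A) : lam 1 b = b := by
  rw [lam, one_mul, one_eq_zero, sub_zero]

theorem lam_inv_lam (a b : A) : lam a⁻¹ (lam a b) = b := by
  rw [← lam_mul, inv_mul_cancel, lam_one]

theorem lam_lam_inv (a b : A) : lam a (lam a⁻¹ b) = b := by
  rw [← lam_mul, mul_inv_cancel, lam_one]

theorem add_eq_mul_lam (a b : A) : a + b = a * lam a⁻¹ b := by
  rw [mul_eq_lam_add, lam_lam_inv, add_comm]

def bstarHom (a : A) : A →+ A := lamHom a - AddMonoidHom.id A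

theorem bstar_zero_right (a : A) : bstar a 0 = 0 := (bstarHom a).map_zero

theorem bstar_add_right (a b c : A) : bstar a (b + c) = bstar a b + bstar a c :=
  (bstarHom a).map_add b c

theorem bstar_neg_right (a b : A) : bstar a (-b) = -bstar a b := (bstarHom a).map_neg b

theorem bstar_zsmul_right (a : A) (m : ℤ) (b : A) : bstar a (m • b) = m • bstar a b :=
  map_zsmul (bstarHom a) m b

theorem bstar_zero_left (b : A) : bstar 0 b = 0 := by
  rw [bstar, ← one_eq_zero, one_mul, one_eq_zero]; abel

theorem bstar_mul_left (a b c : A) : bstar (a * b) c = lam a (bstar b c) + bstar a c := by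
  simp only [bstar_eq_lam_sub, lam_mul, lam_sub]; abel

theorem bstar_inv_left (a b : A) : bstar a⁻¹ b = -lam a⁻¹ (bstar a b) := by
  have h := bstar_mul_left a⁻¹ a b
  rw [inv_mul_cancel, one_eq_zero, bstar_zero_left] at h
  exact eq_neg_of_add_eq_zero_right h.symm

theorem inv_eq_neg_bstar_sub (a : A) : a⁻¹ = -bstar a⁻¹ a - a := by
  have h : lam a a⁻¹ = -a := by rw [lam, mul_inv_cancel, one_eq_zero, zero_sub]
  calc a⁻¹ = lam a⁻¹ (-a) := by rw [← h, lam_inv_lam]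
    _ = -bstar a⁻¹ a - a := by rw [lam_neg, lam_eq_bstar_add]; abel

end Lambda

section Ideal

variable {S : Set A}

def IsSubbrace.toAddSubgroup (hS : IsSubbrace S) : AddSubgroup A where
  carrier := S
  zero_mem' := hS.zero_mem
  add_mem' := hS.add_mem
  neg_mem' := hS.neg_mem

theorem IsSubbrace.zsmul_mem (hS : IsSubbrace S) (m : ℤ) {z : A} (hz : z ∈ S) : m • z ∈ S :=
  hS.toAddSubgroup.zsmul_mem hz m

theorem isSubbrace_univ : IsSubbrace (Set.univ : Set A) :=
  ⟨trivial, fun _ _ => trivial, fun _ => trivial, fun _ _ => trivial, fun _ => trivial⟩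

theorem isIdeal_zero : IsIdeal ({0} : Set A) := by
  refine ⟨Set.subset_univ _, ⟨rfl, ?_, ?_, ?_, ?_⟩, isSubbrace_univ, ?_, ?_⟩
  · rintro _ _ rfl rfl; exact add_zero 0
  · rintro _ rfl; exact neg_zero
  · rintro _ _ rfl rfl; rw [← one_eq_zero, one_mul]; rfl
  · rintro _ rfl; rw [← one_eq_zero, inv_one]; rfl
  · rintro u - _ rfl; exact bstar_zero_right u
  · rintro u - _ rfl; exact bstar_zero_left u

theorem IsIdeal.bstar_mem_left (hS : IsIdeal S) (u : A) {z : A} (hz : z ∈ S) : bstar u z ∈ S :=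
  hS.star_mem_left u trivial z hz

theorem IsIdeal.bstar_mem_right (hS : IsIdeal S) (u : A) {z : A} (hz : z ∈ S) : bstar z u ∈ S :=
  hS.star_mem_right u trivial z hz

theorem IsIdeal.lam_mem (hS : IsIdeal S) (u : A) {z : A} (hz : z ∈ S) : lam u z ∈ S := by
  rw [lam_eq_bstar_add]; exact hS.subbrace.add_mem (hS.bstar_mem_left u hz) hz

theorem IsIdeal.subset_nextCenter (hS : IsIdeal S) : S ⊆ nextCenter A S :=
  fun _ hz x => ⟨hS.bstar_mem_right x hz, hS.bstar_mem_left x hz⟩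

section NextCenter

variable (hS : IsIdeal S) {u v : A}
include hS

theorem zero_mem_nextCenter : (0 : A) ∈ nextCenter A S := fun x => by
  rw [bstar_zero_left, bstar_zero_right]; exact ⟨hS.subbrace.zero_mem, hS.subbrace.zero_mem⟩

theorem add_mem_nextCenter (hu : u ∈ nextCenter A S) (hv : v ∈ nextCenter A S) :
    u + v ∈ nextCenter A S := by
  intro x
  set w := lam v⁻¹ (bstar u⁻¹ v)
  have hw : w ∈ S := hS.lam_mem _ (hv u⁻¹).2
  have hsum : u + v = u * (v * w) :=
    calc u + v = u * (v + bstar u⁻¹ v) := by rw [add_eq_mul_lam, lam_eq_bstar_add, add_comm]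
      _ = u * (v * w) := by rw [← add_eq_mul_lam]
  refine ⟨?_, ?_⟩
  · rw [hsum, bstar_mul_left, bstar_mul_left]
    refine hS.subbrace.add_mem (hS.lam_mem _ (hS.subbrace.add_mem ?_ (hv x).1)) (hu x).1
    exact hS.lam_mem _ (hS.bstar_mem_right x hw)
  · rw [bstar_add_right]; exact hS.subbrace.add_mem (hu x).2 (hv x).2

theorem inv_mem_nextCenter (hv : v ∈ nextCenter A S) : v⁻¹ ∈ nextCenter A S := by
  intro x
  refine ⟨?_, ?_⟩
  · rw [bstar_inv_left]; exact hS.subbrace.neg_mem (hS.lam_mem _ (hv x).1)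
  · rw [inv_eq_neg_bstar_sub v, sub_eq_add_neg, bstar_add_right, bstar_neg_right,
      bstar_neg_right]
    exact hS.subbrace.add_mem (hS.subbrace.neg_mem (hS.bstar_mem_left x (hv v⁻¹).2))
      (hS.subbrace.neg_mem (hv x).2)

theorem neg_mem_nextCenter (hv : v ∈ nextCenter A S) : -v ∈ nextCenter A S := by
  have h : -v = v⁻¹ + bstar v⁻¹ v :=
    calc -v = (-bstar v⁻¹ v - v) + bstar v⁻¹ v := by abel
      _ = v⁻¹ + bstar v⁻¹ v := by rw [← inv_eq_neg_bstar_sub]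
  rw [h]
  exact add_mem_nextCenter hS (inv_mem_nextCenter hS hv) (hS.subset_nextCenter (hv v⁻¹).2)

theorem mul_mem_nextCenter (hu : u ∈ nextCenter A S) (hv : v ∈ nextCenter A S) :
    u * v ∈ nextCenter A S := by
  intro x
  refine ⟨?_, ?_⟩
  · rw [bstar_mul_left]; exact hS.subbrace.add_mem (hS.lam_mem _ (hv x).1) (hu x).1
  · rw [mul_eq_lam_add, lam_eq_bstar_add, bstar_add_right, bstar_add_right]
    exact hS.subbrace.add_mem
      (hS.subbrace.add_mem (hS.bstar_mem_left x (hu v).1) (hv x).2) (hu x).2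

theorem IsIdeal.nextCenter : IsIdeal (nextCenter A S) :=
  ⟨Set.subset_univ _,
    ⟨zero_mem_nextCenter hS, add_mem_nextCenter hS, neg_mem_nextCenter hS,
      mul_mem_nextCenter hS, inv_mem_nextCenter hS⟩,
    isSubbrace_univ,
    fun u _ _ hz => hS.subset_nextCenter (hz u).2,
    fun u _ _ hz => hS.subset_nextCenter (hz u).1⟩

end NextCenter

theorem isIdeal_zetaNat : ∀ n : ℕ, IsIdeal (zetaNat A n)
  | 0 => isIdeal_zero
  | n + 1 => (isIdeal_zetaNat n).nextCenter

end Ideal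

section SelfStarZero

variable {a : A} (haa : bstar a a = 0)
include haa

theorem lam_self : lam a a = a := by
  rw [lam_eq_bstar_add, haa, zero_add]

theorem lam_inv_self : lam a⁻¹ a = a := by
  have h := lam_inv_lam a a
  rwa [lam_self haa] at h

theorem inv_eq_neg : a⁻¹ = -a := by
  rw [inv_eq_neg_bstar_sub, bstar_eq_lam_sub, lam_inv_self haa, sub_self, neg_zero, zero_sub]

theorem zsmul_eq_zpow (m : ℤ) : m • a = a ^ m := by
  induction m using Int.induction_on with
  | zero => rw [zero_smul, zpow_zero, one_eq_zero]
  | succ k ih =>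
    rw [add_comm, zpow_one_add, ← ih, mul_eq_lam_add, lam_zsmul, lam_self haa, add_smul,
      one_smul, add_comm]
  | pred k ih =>
    rw [sub_eq_neg_add, zpow_add, zpow_neg_one, ← ih, mul_eq_lam_add, lam_zsmul,
      lam_inv_self haa, inv_eq_neg haa, add_smul, neg_one_smul, add_comm]

theorem lam_zsmul_self (m : ℤ) : lam (m • a) a = a := by
  rw [lam, zsmul_eq_zpow haa, ← zpow_add_one, ← zsmul_eq_zpow haa, ← zsmul_eq_zpow haa,
    add_smul, one_smul, add_sub_cancel_left]

theorem bstar_zsmul_self (m : ℤ) : bstar (m • a) a = 0 := by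
  rw [bstar_eq_lam_sub, lam_zsmul_self haa, sub_self]

theorem inv_zsmul_self (m : ℤ) : (m • a)⁻¹ = (-m) • a := by
  rw [zsmul_eq_zpow haa, zsmul_eq_zpow haa, zpow_neg]

theorem zsmul_add_eq_mul (m : ℤ) (z : A) : m • a + z = m • a * lam ((-m) • a) z := by
  rw [add_eq_mul_lam, inv_zsmul_self haa]

theorem bstar_zsmul_add_self (m : ℤ) (z : A) :
    bstar (m • a + z) a = lam (m • a) (bstar (lam ((-m) • a) z) a) := by
  rw [zsmul_add_eq_mul haa, bstar_mul_left, bstar_zsmul_self haa, add_zero]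

theorem bstar_zsmul_left {x : A} {c : ℤ} (hx : bstar a x = c • a) (m : ℤ) :
    bstar (m • a) x = (m * c) • a := by
  induction m using Int.induction_on with
  | zero => rw [zero_smul, bstar_zero_left, zero_mul, zero_smul]
  | succ k ih =>
    have h : ((k : ℤ) + 1) • a = (k : ℤ) • a * a := by
      rw [zsmul_eq_zpow haa, zsmul_eq_zpow haa, zpow_add_one]
    rw [h, bstar_mul_left, hx, lam_zsmul, lam_zsmul_self haa, ih, ← add_smul, add_mul, one_mul,
      add_comm]
  | pred k ih =>
    have h : (-(k : ℤ) - 1) • a = (-(k : ℤ)) • a * a⁻¹ := by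
      rw [zsmul_eq_zpow haa, zsmul_eq_zpow haa, zpow_sub_one]
    rw [h, bstar_mul_left, bstar_inv_left, hx, lam_zsmul, lam_inv_self haa, lam_neg, lam_zsmul,
      lam_zsmul_self haa, ih, ← neg_smul, ← add_smul, sub_mul, one_mul, sub_eq_neg_add, add_comm]

end SelfStarZero

section Chain

variable {S : Set A} {a : A}

theorem zmultiples_add_eq_self (hS : IsSubbrace S) (ha : a ∈ S) :
    (zmultiples a : Set A) + S = S := by
  refine (Set.subset_add_right S (zero_mem _)).antisymm' ?_
  rintro _ ⟨_, ⟨m, rfl⟩, z, hz, rfl⟩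
  exact hS.add_mem (hS.zsmul_mem m ha) hz

variable (haa : bstar a a = 0) (hS : IsIdeal S)
include haa hS

theorem bstar_self_mem_of_mem_zmultiples_add {u : A} (hu : u ∈ (zmultiples a : Set A) + S) :
    bstar u a ∈ S := by
  obtain ⟨_, ⟨m, rfl⟩, z, hz, rfl⟩ := hu
  rw [bstar_zsmul_add_self haa]
  exact hS.lam_mem _ (hS.bstar_mem_right a (hS.lam_mem _ hz))

theorem bstar_self_mem_of_mem_zmultiples_add_nextCenter {u : A}
    (hu : u ∈ (zmultiples a : Set A) + nextCenter A S) : bstar u a ∈ S := by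
  obtain ⟨_, ⟨m, rfl⟩, z, hz, rfl⟩ := hu
  rw [bstar_zsmul_add_self haa]
  exact hS.lam_mem _ (hS.nextCenter.lam_mem _ hz a).1

theorem isSubbrace_zmultiples_add : IsSubbrace ((zmultiples a : Set A) + S) := by
  have hmem : ∀ (m : ℤ) {z : A}, z ∈ S → m • a + z ∈ (zmultiples a : Set A) + S :=
    fun m _ hz => Set.add_mem_add (zsmul_mem_zmultiples a m) hz
  constructor
  · simpa using hmem 0 hS.subbrace.zero_mem
  · rintro _ _ ⟨_, ⟨m, rfl⟩, z, hz, rfl⟩ ⟨_, ⟨m', rfl⟩, z', hz', rfl⟩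
    convert hmem (m + m') (hS.subbrace.add_mem hz hz') using 1
    simp only [add_smul]; abel
  · rintro _ ⟨_, ⟨m, rfl⟩, z, hz, rfl⟩
    convert hmem (-m) (hS.subbrace.neg_mem hz) using 1
    simp only [neg_smul]; abel
  · rintro u _ hu ⟨_, ⟨m', rfl⟩, z', hz', rfl⟩
    have hua : bstar u a ∈ S := bstar_self_mem_of_mem_zmultiples_add haa hS hu
    obtain ⟨_, ⟨m, rfl⟩, z, hz, rfl⟩ := hu
    convert hmem (m' + m) (hS.subbrace.add_mem (hS.subbrace.add_mem
      (hS.subbrace.zsmul_mem m' hua) (hS.lam_mem (m • a + z) hz')) hz) using 1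
    simp only [mul_eq_lam_add, lam_add, lam_zsmul, lam_eq_bstar_add _ a, smul_add, add_smul]
    abel
  · rintro _ ⟨_, ⟨m, rfl⟩, z, hz, rfl⟩
    have hw : (lam ((-m) • a) z)⁻¹ ∈ S := hS.subbrace.inv_mem (hS.lam_mem _ hz)
    convert hmem (-m) (hS.subbrace.add_mem
      (hS.subbrace.zsmul_mem (-m) (hS.bstar_mem_right a hw)) hw) using 1
    beta_reduce
    rw [zsmul_add_eq_mul haa m z, mul_inv_rev, inv_zsmul_self haa, mul_eq_lam_add, lam_zsmul,
      lam_eq_bstar_add _ a, smul_add]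
    abel

theorem isIdealIn_zmultiples_add :
    IsIdealIn ((zmultiples a : Set A) + S) ((zmultiples a : Set A) + nextCenter A S) := by
  have hsub : S ⊆ (zmultiples a : Set A) + S := Set.subset_add_right S (zero_mem _)
  refine ⟨Set.add_subset_add_left hS.subset_nextCenter, isSubbrace_zmultiples_add haa hS,
    isSubbrace_zmultiples_add haa hS.nextCenter, ?_, ?_⟩
  · rintro e he _ ⟨_, ⟨j, rfl⟩, w, hw, rfl⟩
    beta_reduce
    rw [bstar_add_right, bstar_zsmul_right]
    exact hsub (hS.subbrace.add_mem (hS.subbrace.zsmul_mem j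
      (bstar_self_mem_of_mem_zmultiples_add_nextCenter haa hS he)) (hS.bstar_mem_left e hw))
  · rintro _ ⟨_, ⟨m, rfl⟩, z, hz, rfl⟩ f hf
    beta_reduce
    rw [bstar_add_right, bstar_zsmul_right]
    exact hsub (hS.subbrace.add_mem (hS.subbrace.zsmul_mem m
      (bstar_self_mem_of_mem_zmultiples_add haa hS hf)) (hz f).2)

end Chain

theorem IsTBrace.isIdeal_of_chain (hT : IsTBrace A) {E : ℕ → Set A}
    (hE : ∀ i, IsIdealIn (E i) (E (i + 1))) {n : ℕ} (hn : IsIdeal (E n)) : IsIdeal (E 0) := by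
  induction n generalizing E with
  | zero => exact hn
  | succ n ih => exact hT _ _ (hE 0) (ih (E := fun i => E (i + 1)) (fun i => hE (i + 1)) hn)

theorem isIdeal_zmultiples (hT : IsTBrace A) {n : ℕ} {a : A} (ha : a ∈ zetaNat A n)
    (haa : bstar a a = 0) : IsIdeal (zmultiples a : Set A) := by
  have htop : IsIdeal ((zmultiples a : Set A) + zetaNat A n) := by
    rw [zmultiples_add_eq_self (isIdeal_zetaNat n).subbrace ha]
    exact isIdeal_zetaNat n
  simpa [zetaNat] using hT.isIdeal_of_chain
    (fun i => isIdealIn_zmultiples_add haa (isIdeal_zetaNat i)) htop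

theorem isOfFinAddOrder_of_mapsTo_zetaNat {f : A → A} {a : A} {c : ℤ} (hc : c ≠ 0)
    (hf : ∀ m : ℤ, f (m • a) = (m * c) • a)
    (hdesc : ∀ i, Set.MapsTo f (zetaNat A (i + 1)) (zetaNat A i)) {n : ℕ}
    (ha : a ∈ zetaNat A n) : IsOfFinAddOrder a := by
  suffices h : ∀ (n : ℕ) (m : ℤ), m • a ∈ zetaNat A n → (m * c ^ n) • a = 0 from
    isOfFinAddOrder_iff_zsmul_eq_zero.2
      ⟨c ^ n, pow_ne_zero n hc, by simpa using h n 1 (by simpa using ha)⟩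
  intro n
  induction n with
  | zero => intro m hm; simpa [zetaNat] using hm
  | succ n ih =>
    intro m hm
    have h := ih _ (hf m ▸ hdesc n hm)
    rwa [mul_assoc, ← pow_succ'] at h

end LeftBrace

open LeftBrace in
/-- **Lemma.** Let `A` be a T-brace, `n` a natural number and `a ∈ ζ_n(⋆,A) \ ζ(⋆,A)`.
If `a` has infinite additive order, then `a ⋆ a ≠ 0`. -/
theorem bstar_self_ne_zero
    {A : Type u} [LeftBrace A] (hT : IsTBrace A) (n : ℕ) (a : A)
    (ha : a ∈ zetaNat A n) (haz : a ∉ starCenter A)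
    (hord : ¬ IsOfFinAddOrder a) :
    bstar a a ≠ 0 := by
  intro haa
  have hI : IsIdeal (zmultiples a : Set A) := isIdeal_zmultiples hT ha haa
  have haI : a ∈ (zmultiples a : Set A) := mem_zmultiples a
  obtain ⟨x, hx⟩ : ∃ x, ¬(bstar a x = 0 ∧ bstar x a = 0) := by
    simpa [starCenter] using haz
  apply hord
  by_cases hax : bstar a x = 0
  · obtain ⟨c, hc⟩ := mem_zmultiples_iff.1 (hI.bstar_mem_left x haI)
    have hc0 : c ≠ 0 := by rintro rfl; exact hx ⟨hax, by rw [← hc, zero_smul]⟩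
    refine isOfFinAddOrder_of_mapsTo_zetaNat (f := bstar x) hc0 (fun m => ?_)
      (fun _ _ hy => (hy x).2) ha
    rw [bstar_zsmul_right, ← hc, mul_smul]
  · obtain ⟨c, hc⟩ := mem_zmultiples_iff.1 (hI.bstar_mem_right x haI)
    have hc0 : c ≠ 0 := by rintro rfl; exact hax (by rw [← hc, zero_smul])
    exact isOfFinAddOrder_of_mapsTo_zetaNat (f := (bstar · x)) hc0 (bstar_zsmul_left haa hc.symm)
      (fun _ _ hy => (hy x).1) ha
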